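/- arXiv:2302.13660 — 2 statements merged into one kernel-verified Lean document; each statement's English description precedes it below -/
import Mathlib

section
/- If a linearly ordered field F satisfies the Cut Axiom (CA), then F satisfies the Lebesgue Integral Property (LIP): for all a ≤ b in F, every Lebesgue measurable function [a,b] → F has a Lebesgue integral. -/
/-!
The Cut Axiom makes `F` Dedekind complete, hence isomorphic to `ℝ` as an ordered field, and every
notion in the statement is preserved by order-ring isomorphisms. Over `ℝ` a step integral is the
interval integral of the step function and a null set has Lebesgue measure zero; a decreasing
sequence of nonnegative step functions converging a.e. to `f` is dominated by its first term, so
by dominated convergence its step integrals converge to `∫ x in a..b, f x`, whichever sequence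
was chosen.
-/

namespace Littlewood

variable {F : Type*} [Field F] [LinearOrder F] [IsStrictOrderedRing F]

/-- A sequence `s` in `F` converges to `L`. -/
def SeqConv (s : ℕ → F) (L : F) : Prop :=
  ∀ ε : F, 0 < ε → ∃ N : ℕ, ∀ n, N ≤ n → s n - L ∈ Set.Ioo (-ε) ε

/-- `φ` is a step function on `[a,b]`: there is a partition
`a = x 0 < x 1 < ⋯ < x n = b` such that `φ` is constant on each open subinterval. -/
def IsStepOn (a b : F) (φ : F → F) : Prop :=
  ∃ (n : ℕ) (x : ℕ → F), x 0 = a ∧ x n = b ∧ (∀ i < n, x i < x (i + 1)) ∧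
    ∀ i < n, ∃ M : F, ∀ t ∈ Set.Ioo (x i) (x (i + 1)), φ t = M

/-- `I` is the integral of the step function `φ` over `[a,b]`, computed from
an admissible partition `a = x 0 < ⋯ < x n = b` with constant values `M i`. -/
def HasStepIntegral (a b : F) (φ : F → F) (I : F) : Prop :=
  ∃ (n : ℕ) (x : ℕ → F) (M : ℕ → F), x 0 = a ∧ x n = b ∧ (∀ i < n, x i < x (i + 1)) ∧
    (∀ i < n, ∀ t ∈ Set.Ioo (x i) (x (i + 1)), φ t = M i) ∧
    I = ∑ i ∈ Finset.range n, M i * (x (i + 1) - x i)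

/-- `S ⊆ [a,b]` has measure zero: for every `ε > 0` there is a countable family of
open intervals `(c n, d n) ⊆ [a,b]` covering `S` whose partial sums of lengths
converge to a sum less than `ε`. -/
def NullSet (a b : F) (S : Set F) : Prop :=
  ∀ ε : F, 0 < ε → ∃ c d : ℕ → F,
    (∀ n, c n ≤ d n ∧ Set.Ioo (c n) (d n) ⊆ Set.Icc a b) ∧
    S ⊆ (⋃ n, Set.Ioo (c n) (d n)) ∧
    ∃ s : F, s < ε ∧ SeqConv (fun N => ∑ k ∈ Finset.range N, (d k - c k)) s

/-- `Q` holds almost everywhere in `[a,b]`. -/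
def AEOn (a b : F) (Q : F → Prop) : Prop :=
  NullSet a b {x ∈ Set.Icc a b | ¬ Q x}

/-- `φ` is a monotonically decreasing sequence of step functions `[a,b] → P ∪ {0}`
converging to `f` almost everywhere in `[a,b]`. -/
def ApproxSeq (a b : F) (φ : ℕ → F → F) (f : F → F) : Prop :=
  (∀ n, IsStepOn a b (φ n)) ∧
  (∀ n, ∀ x ∈ Set.Icc a b, 0 ≤ φ n x) ∧
  (∀ n, ∀ x ∈ Set.Icc a b, φ (n + 1) x ≤ φ n x) ∧
  AEOn a b fun x => SeqConv (fun n => φ n x) (f x)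

/-- A nonnegative-valued function on `[a,b]` is Lebesgue measurable. -/
def LebMeasurableNN (a b : F) (f : F → F) : Prop :=
  ∃ φ : ℕ → F → F, ApproxSeq a b φ f

/-- A nonnegative-valued function on `[a,b]` has Lebesgue integral `I`:
it is Lebesgue measurable and for every monotonically decreasing sequence of
nonnegative step functions converging to `f` a.e., the sequence of their
(step) integrals converges to `I`. -/
def HasLebIntegralNN (a b : F) (f : F → F) (I : F) : Prop :=
  LebMeasurableNN a b f ∧
    ∀ φ : ℕ → F → F, ApproxSeq a b φ f →
      ∀ J : ℕ → F, (∀ n, HasStepIntegral a b (φ n) (J n)) → SeqConv J I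

/-- A function `[a,b] → F` is Lebesgue measurable (via its nonnegative parts). -/
def LebMeasurable (a b : F) (f : F → F) : Prop :=
  LebMeasurableNN a b (fun x => max (f x) 0) ∧ LebMeasurableNN a b fun x => max (-f x) 0

/-- A function `[a,b] → F` has a Lebesgue integral (via its nonnegative parts). -/
def HasLebIntegral (a b : F) (f : F → F) : Prop :=
  (∃ I : F, HasLebIntegralNN a b (fun x => max (f x) 0) I) ∧
  ∃ I : F, HasLebIntegralNN a b (fun x => max (-f x) 0) I

/-- The characteristic function of `E`. -/
noncomputable def chi (E : Set F) : F → F := E.indicator fun _ => 1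

/-- `E ⊆ [a,b]` is a measurable set: its characteristic function is Lebesgue measurable. -/
def MeasSet (a b : F) (E : Set F) : Prop := LebMeasurableNN a b (chi E)

/-- `E` has Lebesgue measure: `E` has measure zero or `χ_E` has a Lebesgue integral. -/
def HasLebMeasure (a b : F) (E : Set F) : Prop :=
  NullSet a b E ∨ ∃ I : F, HasLebIntegralNN a b (chi E) I

/-- `S` is an interval with endpoints `c ≤ d` (any of the four kinds). -/
def IsIntervalWith (S : Set F) (c d : F) : Prop :=
  S = Set.Icc c d ∨ S = Set.Ico c d ∨ S = Set.Ioc c d ∨ S = Set.Ioo c d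

/-- `S` is an interval. -/
def IsInterval (S : Set F) : Prop := ∃ c d : F, IsIntervalWith S c d

/-- `f` is continuous on `D`. -/
def ContOn (D : Set F) (f : F → F) : Prop :=
  ∀ c ∈ D, ∀ ε : F, 0 < ε → ∃ δ : F, 0 < δ ∧
    ∀ x ∈ D ∩ Set.Ioo (c - δ) (c + δ), f x - f c ∈ Set.Ioo (-ε) ε

/-- The functions `g n` converge uniformly to `f` on `D`. -/
def UnifConvOn (D : Set F) (g : ℕ → F → F) (f : F → F) : Prop :=
  ∀ ε : F, 0 < ε → ∃ N : ℕ, ∀ n, N ≤ n → ∀ x ∈ D, f x - g n x ∈ Set.Ioo (-ε) ε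

/-- `A` is a cut of `F`. -/
def IsCut (A : Set F) : Prop :=
  A.Nonempty ∧ A ≠ Set.univ ∧ ∀ x ∈ A, ∀ y ∉ A, x < y

/-- `c` is a cut point of `A`. -/
def IsCutPoint (A : Set F) (c : F) : Prop :=
  ∀ x ∈ A, ∀ y ∉ A, x ≤ c ∧ c ≤ y

variable (F) in
/-- The Cut Axiom: every cut of `F` has a cut point. -/
def CutAxiom : Prop := ∀ A : Set F, IsCut A → ∃ c : F, IsCutPoint A c

variable (F) in
/-- Lebesgue Integral Property. -/
def LIP : Prop :=
  ∀ a b : F, a ≤ b → ∀ f : F → F, LebMeasurable a b f → HasLebIntegral a b f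

variable (F) in
/-- Lebesgue Measure Property. -/
def LMP : Prop :=
  ∀ a b : F, a ≤ b → ∀ E ⊆ Set.Icc a b, MeasSet a b E → HasLebMeasure a b E

variable (F) in
/-- Littlewood's First Principle. -/
def LP1 : Prop :=
  ∀ a b : F, a ≤ b → ∀ E ⊆ Set.Icc a b, MeasSet a b E → ∀ ε : F, 0 < ε →
    ∃ (m : ℕ) (I : ℕ → Set F), (∀ i < m, IsInterval (I i) ∧ I i ⊆ Set.Icc a b) ∧
      ∃ J : F, HasLebIntegralNN a b
        (chi ((E \ ⋃ i < m, I i) ∪ ((⋃ i < m, I i) \ E))) J ∧ J < ε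

variable (F) in
/-- Littlewood's Second Principle. -/
def LP2 : Prop :=
  ∀ a b : F, a ≤ b → ∀ f : F → F, LebMeasurable a b f → ∀ ε : F, 0 < ε →
    ∃ E ⊆ Set.Icc a b, MeasSet a b E ∧ ContOn (Set.Icc a b \ E) f ∧
      ∃ J : F, HasLebIntegralNN a b (chi E) J ∧ J < ε

variable (F) in
/-- Littlewood's Third Principle. -/
def LP3 : Prop :=
  ∀ a b : F, a ≤ b → ∀ φ : ℕ → F → F, (∀ n, LebMeasurable a b (φ n)) →
    ∀ f : F → F, AEOn a b (fun x => SeqConv (fun n => φ n x) (f x)) →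
    ∀ ε : F, 0 < ε →
      ∃ E ⊆ Set.Icc a b, MeasSet a b E ∧ UnifConvOn (Set.Icc a b \ E) φ f ∧
        ∃ J : F, HasLebIntegralNN a b (chi E) J ∧ J < ε

open Set

section Cut

variable {α : Type*} [LinearOrder α] {A : Set α} {c x y : α}

theorem isCut_of_isLowerSet (hA : IsLowerSet A) (hne : A.Nonempty) (hne' : A ≠ univ) : IsCut A :=
  ⟨hne, hne', fun _ hx _ hy => lt_of_not_ge fun h => hy (hA h hx)⟩

theorem IsCutPoint.le_of_mem (hc : IsCutPoint A c) (hx : x ∈ A) (hy : y ∉ A) : x ≤ c :=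
  (hc x hx y hy).1

theorem IsCutPoint.le_of_notMem (hc : IsCutPoint A c) (hx : x ∈ A) (hy : y ∉ A) : c ≤ y :=
  (hc x hx y hy).2

end Cut

section CutAxiom

theorem CutAxiom.archimedean (hCA : CutAxiom F) : Archimedean F := by
  rw [archimedean_iff_nat_le]
  by_contra! hbdd
  obtain ⟨x, hx⟩ := hbdd
  set A : Set F := {y | ∃ n : ℕ, y ≤ n}
  have hxA : x ∉ A := fun ⟨n, hn⟩ => (hx n).not_ge hn
  have hcut : IsCut A :=
    isCut_of_isLowerSet (fun _ _ hyz ⟨n, hn⟩ => ⟨n, hyz.trans hn⟩) ⟨0, 0, by simp⟩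
      (ne_univ_iff_exists_notMem _ |>.2 ⟨x, hxA⟩)
  obtain ⟨c, hc⟩ := hCA A hcut
  obtain ⟨n, hn⟩ : c - 1 ∈ A := by
    by_contra h
    linarith [hc.le_of_notMem (⟨0, by simp⟩ : (0 : F) ∈ A) h]
  have : ((n + 2 : ℕ) : F) ≤ c := hc.le_of_mem ⟨n + 2, le_rfl⟩ hxA
  push_cast at this
  linarith

theorem CutAxiom.inducedOrderRingHom_surjective [Archimedean F] (hCA : CutAxiom F) :
    Function.Surjective (ConditionallyCompleteLinearOrderedField.inducedOrderRingHom F ℝ) := by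
  set e := ConditionallyCompleteLinearOrderedField.inducedOrderRingHom F ℝ
  intro r
  set A : Set F := {x | e x < r}
  obtain ⟨p, hp⟩ := exists_rat_lt r
  obtain ⟨q, hq⟩ := exists_rat_gt r
  have hpA : (p : F) ∈ A := by simpa [A] using hp
  have hqA : (q : F) ∉ A := by simpa [A] using hq.le
  obtain ⟨c, hc⟩ := hCA A <|
    isCut_of_isLowerSet (fun _ _ hyz hz => (OrderHomClass.mono e hyz).trans_lt hz) ⟨p, hpA⟩
      (ne_univ_iff_exists_notMem _ |>.2 ⟨q, hqA⟩)
  refine ⟨c, le_antisymm (not_lt.1 fun hlt => ?_) (not_lt.1 fun hlt => ?_)⟩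
  · obtain ⟨s, hrs, hsc⟩ := exists_rat_btwn hlt
    have hsA : (s : F) ∉ A := by simpa [A] using hrs.le
    have := OrderHomClass.mono e (hc.le_of_notMem hpA hsA)
    simp only [map_ratCast] at this
    linarith
  · obtain ⟨s, hcs, hsr⟩ := exists_rat_btwn hlt
    have hsA : (s : F) ∈ A := by simpa [A] using hsr
    have := OrderHomClass.mono e (hc.le_of_mem hsA hqA)
    simp only [map_ratCast] at this
    linarith

noncomputable def CutAxiom.orderRingIsoReal (hCA : CutAxiom F) : F ≃+*o ℝ :=
  haveI := hCA.archimedean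
  let e := ConditionallyCompleteLinearOrderedField.inducedOrderRingHom F ℝ
  have he : StrictMono e :=
    (OrderHomClass.mono e).strictMono_of_injective (e : F →+* ℝ).injective
  { RingEquiv.ofBijective e ⟨he.injective, hCA.inducedOrderRingHom_surjective⟩ with
    map_le_map_iff' := he.le_iff_le }

end CutAxiom

section OrderRingIso

variable {K L : Type*} [Field K] [LinearOrder K] [Field L] [LinearOrder L] (e : K ≃+*o L)

attribute [local simp] map_lt_map_iff map_le_map_iff OrderRingIso.symm_apply_lt
  OrderRingIso.lt_symm_apply

theorem map_mem_Ioo_neg_iff {x ε : K} : e x ∈ Ioo (-e ε) (e ε) ↔ x ∈ Ioo (-ε) ε := by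
  simp [← map_neg]

theorem SeqConv.map {s : ℕ → K} {l : K} (h : SeqConv s l) : SeqConv (fun n => e (s n)) (e l) := by
  intro ε hε
  obtain ⟨N, hN⟩ := h (e.symm ε) (by simpa using hε)
  refine ⟨N, fun n hn => ?_⟩
  simpa [← map_sub] using (map_mem_Ioo_neg_iff e).2 (hN n hn)

theorem IsStepOn.map {a b : K} {φ : K → K} (h : IsStepOn a b φ) :
    IsStepOn (e a) (e b) (fun y => e (φ (e.symm y))) := by
  obtain ⟨n, x, rfl, rfl, hx, hφ⟩ := h
  refine ⟨n, fun i => e (x i), rfl, rfl, fun i hi => by simpa using hx i hi, fun i hi => ?_⟩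
  obtain ⟨M, hM⟩ := hφ i hi
  exact ⟨e M, e.surjective.forall.2 fun s hs => by simp_all⟩

theorem HasStepIntegral.map {a b J : K} {φ : K → K} (h : HasStepIntegral a b φ J) :
    HasStepIntegral (e a) (e b) (fun y => e (φ (e.symm y))) (e J) := by
  obtain ⟨n, x, M, rfl, rfl, hx, hφ, rfl⟩ := h
  refine ⟨n, fun i => e (x i), fun i => e (M i), rfl, rfl, fun i hi => by simpa using hx i hi,
    fun i hi => e.surjective.forall.2 fun s hs => by
      simpa using congrArg e (hφ i hi s (by simpa using hs)), by simp [map_sum]⟩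

theorem NullSet.mono {a b : K} {S T : Set K} (h : NullSet a b S) (hTS : T ⊆ S) :
    NullSet a b T := fun ε hε =>
  let ⟨c, d, hcd, hS, hsum⟩ := h ε hε
  ⟨c, d, hcd, hTS.trans hS, hsum⟩

theorem NullSet.image {a b : K} {S : Set K} (h : NullSet a b S) :
    NullSet (e a) (e b) (e '' S) := by
  intro ε hε
  obtain ⟨c, d, hcd, hS, s, hs, hconv⟩ := h (e.symm ε) (by simpa using hε)
  refine ⟨fun n => e (c n), fun n => e (d n), fun n => ⟨by simpa using (hcd n).1, ?_⟩, ?_,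
    e s, by simpa using hs, by simpa [map_sum] using hconv.map e⟩
  · have := image_mono (f := e.toOrderIso) (hcd n).2
    rwa [OrderIso.image_Ioo, OrderIso.image_Icc] at this
  · rintro _ ⟨x, hx, rfl⟩
    obtain ⟨_, ⟨n, rfl⟩, hxn⟩ := hS hx
    exact mem_iUnion.2 ⟨n, by simpa using hxn⟩

theorem AEOn.mono {a b : K} {Q Q' : K → Prop} (h : AEOn a b Q)
    (hQ : ∀ x ∈ Icc a b, Q x → Q' x) : AEOn a b Q' :=
  NullSet.mono h fun x ⟨hx, hQ'x⟩ => ⟨hx, fun hQx => hQ'x (hQ x hx hQx)⟩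

theorem AEOn.map {a b : K} {Q : K → Prop} (h : AEOn a b Q) :
    AEOn (e a) (e b) (fun y => Q (e.symm y)) := by
  refine (NullSet.image e h).mono fun y ⟨hy, hQ⟩ => ⟨e.symm y, ⟨?_, hQ⟩, e.apply_symm_apply y⟩
  obtain ⟨x, rfl⟩ := e.surjective y
  simpa using hy

theorem ApproxSeq.map {a b : K} {φ : ℕ → K → K} {f : K → K} (h : ApproxSeq a b φ f) :
    ApproxSeq (e a) (e b) (fun n y => e (φ n (e.symm y))) (fun y => e (f (e.symm y))) := by
  obtain ⟨hstep, hnonneg, hdec, hae⟩ := h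
  refine ⟨fun n => (hstep n).map e, fun n => e.surjective.forall.2 fun x hx => ?_,
    fun n => e.surjective.forall.2 fun x hx => ?_, (hae.map e).mono fun y _ hy => hy.map e⟩
  · simpa using map_nonneg e (hnonneg n x (by simpa using hx))
  · simpa using hdec n x (by simpa using hx)

theorem LebMeasurableNN.map {a b : K} {f : K → K} (h : LebMeasurableNN a b f) :
    LebMeasurableNN (e a) (e b) (fun y => e (f (e.symm y))) :=
  let ⟨_, hφ⟩ := h
  ⟨_, hφ.map e⟩

theorem HasLebIntegralNN.of_map {a b : K} {f : K → K} {I : L} (hf : LebMeasurableNN a b f)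
    (h : HasLebIntegralNN (e a) (e b) (fun y => e (f (e.symm y))) I) :
    HasLebIntegralNN a b f (e.symm I) :=
  ⟨hf, fun _ hφ _ hJ => by simpa using (h.2 _ (hφ.map e) _ fun n => (hJ n).map e).map e.symm⟩

end OrderRingIso

section Real

open MeasureTheory Filter Topology Interval

theorem seqConv_iff_tendsto {s : ℕ → ℝ} {L : ℝ} : SeqConv s L ↔ Tendsto s atTop (𝓝 L) := by
  simp [SeqConv, Metric.tendsto_atTop, Real.dist_eq, abs_lt]

theorem NullSet.volume_eq_zero {a b : ℝ} {S : Set ℝ} (h : NullSet a b S) : volume S = 0 := by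
  refine le_antisymm (ENNReal.le_of_forall_pos_le_add fun ε hε _ => ?_) zero_le
  obtain ⟨c, d, hcd, hS, s, hs, hconv⟩ := h ε (by exact_mod_cast hε)
  have hsum : HasSum (fun n => d n - c n) s :=
    (hasSum_iff_tendsto_nat_of_nonneg (fun n => sub_nonneg.2 (hcd n).1) s).2
      (seqConv_iff_tendsto.1 hconv)
  calc volume S ≤ ∑' n, volume (Ioo (c n) (d n)) := (measure_mono hS).trans (measure_iUnion_le _)
    _ = ENNReal.ofReal s := by
      simp only [Real.volume_Ioo]
      rw [← ENNReal.ofReal_tsum_of_nonneg (fun n => sub_nonneg.2 (hcd n).1) hsum.summable,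
        hsum.tsum_eq]
    _ ≤ 0 + ε := by
      rw [zero_add, ← ENNReal.ofReal_coe_nnreal]
      exact ENNReal.ofReal_le_ofReal hs.le

theorem AEOn.ae {a b : ℝ} {Q : ℝ → Prop} (h : AEOn a b Q) : ∀ᵐ x, x ∈ Icc a b → Q x := by
  filter_upwards [measure_eq_zero_iff_ae_notMem.1 h.volume_eq_zero] with x hx hxI
  exact not_not.1 fun hQ => hx ⟨hxI, hQ⟩

theorem intervalIntegrable_and_integral_eq_of_eqOn_Ioo {φ : ℝ → ℝ} {c d M : ℝ} (hcd : c ≤ d)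
    (h : EqOn φ (fun _ => M) (Ioo c d)) :
    IntervalIntegrable φ volume c d ∧ ∫ t in c..d, φ t = M * (d - c) := by
  refine ⟨(intervalIntegrable_iff_integrableOn_Ioo_of_le hcd).2
    ((integrableOn_const (by simp)).congr_fun h.symm measurableSet_Ioo), ?_⟩
  rw [intervalIntegral.integral_of_le hcd, integral_Ioc_eq_integral_Ioo,
    setIntegral_congr_fun measurableSet_Ioo h, setIntegral_const,
    Real.volume_real_Ioo_of_le hcd, smul_eq_mul, mul_comm]

theorem intervalIntegrable_and_integral_eq_of_partition {φ : ℝ → ℝ} {x M : ℕ → ℝ} (n : ℕ)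
    (hx : ∀ i < n, x i < x (i + 1)) (hφ : ∀ i < n, ∀ t ∈ Ioo (x i) (x (i + 1)), φ t = M i) :
    IntervalIntegrable φ volume (x 0) (x n) ∧
      ∫ t in x 0..x n, φ t = ∑ i ∈ Finset.range n, M i * (x (i + 1) - x i) := by
  induction n with
  | zero => exact ⟨.refl, by simp⟩
  | succ n ih =>
    obtain ⟨hint, heq⟩ := ih (fun i hi => hx i (by omega)) (fun i hi => hφ i (by omega))
    obtain ⟨hint', heq'⟩ :=
      intervalIntegrable_and_integral_eq_of_eqOn_Ioo (hx n n.lt_succ_self).le (hφ n n.lt_succ_self)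
    exact ⟨hint.trans hint', by
      rw [← intervalIntegral.integral_add_adjacent_intervals hint hint', heq, heq',
        Finset.sum_range_succ]⟩

theorem HasStepIntegral.intervalIntegrable_and_integral_eq {a b J : ℝ} {φ : ℝ → ℝ}
    (h : HasStepIntegral a b φ J) :
    IntervalIntegrable φ volume a b ∧ ∫ t in a..b, φ t = J := by
  obtain ⟨n, x, M, rfl, rfl, hx, hφ, rfl⟩ := h
  exact intervalIntegrable_and_integral_eq_of_partition n hx hφ

theorem hasLebIntegralNN_intervalIntegral {a b : ℝ} (hab : a ≤ b) {f : ℝ → ℝ}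
    (hf : LebMeasurableNN a b f) : HasLebIntegralNN a b f (∫ x in a..b, f x) := by
  refine ⟨hf, fun φ ⟨_, hnonneg, hdec, hae⟩ J hJ => ?_⟩
  have hint n := (hJ n).intervalIntegrable_and_integral_eq
  have hsub : Ι a b ⊆ Icc a b := by
    rw [uIoc_of_le hab]
    exact Ioc_subset_Icc_self
  rw [seqConv_iff_tendsto, show J = fun n => ∫ x in a..b, φ n x from
    funext fun n => (hint n).2.symm]
  refine intervalIntegral.tendsto_integral_filter_of_dominated_convergence (φ 0)
    (.of_forall fun n => (hint n).1.def'.aestronglyMeasurable)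
    (.of_forall fun n => ae_of_all _ fun x hx => ?_) (hint 0).1 ?_
  · rw [Real.norm_of_nonneg (hnonneg n x (hsub hx))]
    exact antitone_nat_of_succ_le (f := fun k => φ k x) (fun k => hdec k x (hsub hx))
      (Nat.zero_le n)
  · filter_upwards [hae.ae] with x hx hxI
    exact seqConv_iff_tendsto.1 (hx (hsub hxI))

end Real

theorem cutAxiom_implies_lebesgueIntegralProperty (F : Type*) [Field F] [LinearOrder F] [IsStrictOrderedRing F]
    (hCA : CutAxiom F) :
    ∀ a b : F, a ≤ b → ∀ f : F → F, LebMeasurable a b f → HasLebIntegral a b f := by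
  intro a b hab f hf
  let e := hCA.orderRingIsoReal
  have key : ∀ g : F → F, LebMeasurableNN a b g → ∃ I, HasLebIntegralNN a b g I := fun g hg =>
    ⟨_, (hasLebIntegralNN_intervalIntegral ((map_le_map_iff e).2 hab) (hg.map e)).of_map e hg⟩
  exact ⟨key _ hf.1, key _ hf.2⟩

end Littlewood
end

section
/- If a linearly ordered field F does not satisfy the Cut Axiom (that is, F has a gap), then the Lebesgue Measure Property fails in F: there exist a ≤ b in F and a measurable set E ⊆ [a,b] that does not have Lebesgue measure. -/
namespace Littlewood

variable {F : Type*} [Field F] [LinearOrder F] [IsStrictOrderedRing F]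

/-!
If `t` decreases in `(a, b]`, the step functions `χ_[a, t n]` decrease to `χ_E` everywhere, where
`E = ⋂ n, [a, t n]`, so `E` is measurable. Since `a ∈ E` and no interval inside `[a, b]` contains `a`,
`E` is not null; its integral would be the limit of `t n - a`, so if `t` has no limit, `E` has no
Lebesgue measure.

Such a `t` exists as soon as `F` has a gap: if `(1/2)^n` does not tend to `0` it has no limit at
all, and if it does, the upper ends of the bisection intervals of a gap have no limit, since a limit
would be a cut point.
-/

theorem seqConv_iff_abs_sub_lt {s : ℕ → F} {L : F} :
    SeqConv s L ↔ ∀ ε : F, 0 < ε → ∃ N : ℕ, ∀ n, N ≤ n → |s n - L| < ε := by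
  simp only [SeqConv, Set.mem_Ioo, abs_lt]

theorem seqConv_of_eventually_eq {s : ℕ → F} {L : F} {N : ℕ} (h : ∀ n, N ≤ n → s n = L) :
    SeqConv s L :=
  fun ε hε => ⟨N, fun n hn => by simp [h n hn, hε]⟩

omit [IsStrictOrderedRing F] in
theorem seqConv_sub_const_iff {s : ℕ → F} {c L : F} :
    SeqConv (fun n => s n - c) L ↔ SeqConv s (L + c) := by
  simp only [SeqConv, sub_sub, add_comm c L]

theorem SeqConv.sub {s u : ℕ → F} {L M : F} (hs : SeqConv s L) (hu : SeqConv u M) :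
    SeqConv (fun n => s n - u n) (L - M) := by
  rw [seqConv_iff_abs_sub_lt] at *
  intro ε hε
  obtain ⟨N₁, h₁⟩ := hs (ε / 2) (half_pos hε)
  obtain ⟨N₂, h₂⟩ := hu (ε / 2) (half_pos hε)
  refine ⟨max N₁ N₂, fun n hn => ?_⟩
  calc |s n - u n - (L - M)| = |(s n - L) - (u n - M)| := by ring_nf
    _ ≤ |s n - L| + |u n - M| := abs_sub _ _
    _ < ε / 2 + ε / 2 :=
      add_lt_add (h₁ n (le_of_max_le_left hn)) (h₂ n (le_of_max_le_right hn))
    _ = ε := add_halves ε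

theorem SeqConv.const_mul {s : ℕ → F} {L : F} (hs : SeqConv s L) (c : F) :
    SeqConv (fun n => c * s n) (c * L) := by
  rw [seqConv_iff_abs_sub_lt] at *
  intro ε hε
  have hc : 0 < |c| + 1 := by positivity
  obtain ⟨N, hN⟩ := hs (ε / (|c| + 1)) (div_pos hε hc)
  refine ⟨N, fun n hn => ?_⟩
  calc |c * s n - c * L| = |c| * |s n - L| := by rw [← mul_sub, abs_mul]
    _ ≤ (|c| + 1) * |s n - L| := by gcongr; linarith
    _ < (|c| + 1) * (ε / (|c| + 1)) := by gcongr; exact hN n hn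
    _ = ε := mul_div_cancel₀ _ hc.ne'

theorem SeqConv.le_of_forall_le {s : ℕ → F} {L y : F} (hs : SeqConv s L) (h : ∀ n, s n ≤ y) :
    L ≤ y := by
  by_contra! hy
  obtain ⟨N, hN⟩ := hs (L - y) (sub_pos.mpr hy)
  linarith [(hN N le_rfl).1, h N]

theorem SeqConv.ge_of_forall_le {s : ℕ → F} {L x : F} (hs : SeqConv s L) (h : ∀ n, x ≤ s n) :
    x ≤ L := by
  by_contra! hx
  obtain ⟨N, hN⟩ := hs (x - L) (sub_pos.mpr hx)
  linarith [(hN N le_rfl).2, h N]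

theorem eq_zero_of_seqConv_half_pow {L : F} (h : SeqConv (fun n => (1 / 2 : F) ^ n) L) :
    L = 0 := by
  rcases (h.ge_of_forall_le fun n => by positivity).eq_or_lt with h0 | hpos
  · exact h0.symm
  obtain ⟨N, hN⟩ := h (L / 3) (by positivity)
  have h₁ := (hN N le_rfl).2
  have h₂ := (hN (N + 1) N.le_succ).1
  simp only [pow_succ] at h₁ h₂
  linarith

omit [LinearOrder F] [IsStrictOrderedRing F] in
theorem chi_of_mem {E : Set F} {x : F} (h : x ∈ E) : chi E x = 1 :=
  Set.indicator_of_mem h _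

omit [LinearOrder F] [IsStrictOrderedRing F] in
theorem chi_of_notMem {E : Set F} {x : F} (h : x ∉ E) : chi E x = 0 :=
  Set.indicator_of_notMem h _

theorem chi_nonneg (E : Set F) (x : F) : 0 ≤ chi E x :=
  Set.indicator_nonneg (fun _ _ => zero_le_one) x

theorem chi_le_chi_of_subset {S T : Set F} (h : S ⊆ T) (x : F) : chi S x ≤ chi T x :=
  Set.indicator_le_indicator_of_subset h (fun _ => zero_le_one) x

theorem seqConv_chi_iInter {S : ℕ → Set F} (hS : Antitone S) (x : F) :
    SeqConv (fun n => chi (S n) x) (chi (⋂ n, S n) x) := by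
  by_cases hx : x ∈ ⋂ n, S n
  · exact seqConv_of_eventually_eq (N := 0) fun n _ => by
      rw [chi_of_mem (Set.mem_iInter.mp hx n), chi_of_mem hx]
  · obtain ⟨m, hm⟩ : ∃ m, x ∉ S m := by simpa using hx
    exact seqConv_of_eventually_eq (N := m) fun n hn => by
      rw [chi_of_notMem fun h => hm (hS hn h), chi_of_notMem hx]

theorem nullSet_empty {a b : F} : NullSet a b (∅ : Set F) :=
  fun _ hε => ⟨fun _ => a, fun _ => a, fun _ => ⟨le_rfl, by simp⟩, by simp, 0, hε,
    seqConv_of_eventually_eq (N := 0) fun n _ => by simp⟩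

theorem aeOn_of_forall {a b : F} {Q : F → Prop} (h : ∀ x ∈ Set.Icc a b, Q x) :
    AEOn a b Q := by
  have hempty : {x ∈ Set.Icc a b | ¬ Q x} = ∅ :=
    Set.eq_empty_of_forall_notMem fun x hx => hx.2 (h x hx.1)
  rw [AEOn, hempty]
  exact nullSet_empty

theorem not_nullSet_of_left_mem {a b : F} {S : Set F} (ha : a ∈ S) : ¬ NullSet a b S := by
  intro h
  obtain ⟨c, d, hcd, hcover, -⟩ := h 1 one_pos
  obtain ⟨n, hn⟩ := Set.mem_iUnion.mp (hcover ha)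
  have hmid : (c n + a) / 2 ∈ Set.Ioo (c n) (d n) := ⟨by linarith [hn.1], by linarith [hn.1, hn.2]⟩
  linarith [((hcd n).2 hmid).1, hn.1]

omit [IsStrictOrderedRing F] in
theorem HasStepIntegral.isStepOn {a b : F} {φ : F → F} {I : F} (h : HasStepIntegral a b φ I) :
    IsStepOn a b φ := by
  obtain ⟨n, x, M, hx0, hxn, hx, hM, -⟩ := h
  exact ⟨n, x, hx0, hxn, hx, fun i hi => ⟨M i, hM i hi⟩⟩

omit [IsStrictOrderedRing F] in
theorem hasStepIntegral_chi_Icc {a b t : F} (hat : a < t) (htb : t ≤ b) :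
    HasStepIntegral a b (chi (Set.Icc a t)) (t - a) := by
  rcases htb.eq_or_lt with rfl | htb
  · refine ⟨1, fun i => match i with | 0 => a | _ => t, fun _ => 1, rfl, rfl, ?_, ?_, by simp⟩
    · intro i hi
      interval_cases i
      exact hat
    · intro i hi u hu
      interval_cases i
      exact chi_of_mem (Set.Ioo_subset_Icc_self hu)
  · refine ⟨2, fun i => match i with | 0 => a | 1 => t | _ => b,
      fun i => match i with | 0 => 1 | _ => 0, rfl, rfl, ?_, ?_, ?_⟩
    · intro i hi
      interval_cases i
      exacts [hat, htb]
    · intro i hi u hu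
      interval_cases i
      · exact chi_of_mem (Set.Ioo_subset_Icc_self hu)
      · exact chi_of_notMem fun hu' => (not_le.mpr hu.1) hu'.2
    · simp [Finset.sum_range_succ]

theorem approxSeq_chi_Icc {a b : F} {t : ℕ → F} (ht : Antitone t) (hat : ∀ n, a < t n)
    (htb : ∀ n, t n ≤ b) :
    ApproxSeq a b (fun n => chi (Set.Icc a (t n))) (chi (⋂ n, Set.Icc a (t n))) := by
  have hS : Antitone fun n => Set.Icc a (t n) := fun _ _ hmn => Set.Icc_subset_Icc_right (ht hmn)
  exact ⟨fun n => (hasStepIntegral_chi_Icc (hat n) (htb n)).isStepOn,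
    fun n x _ => chi_nonneg _ x, fun n x _ => chi_le_chi_of_subset (hS n.le_succ) x,
    aeOn_of_forall fun x _ => seqConv_chi_iInter hS x⟩

theorem exists_measSet_not_hasLebMeasure {a b : F} {t : ℕ → F} (ht : Antitone t)
    (hat : ∀ n, a < t n) (htb : ∀ n, t n ≤ b) (hdiv : ∀ L, ¬ SeqConv t L) :
    ∃ E ⊆ Set.Icc a b, MeasSet a b E ∧ ¬ HasLebMeasure a b E := by
  have happrox := approxSeq_chi_Icc ht hat htb
  refine ⟨⋂ n, Set.Icc a (t n), fun x hx => ?_, ⟨_, happrox⟩, ?_⟩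
  · obtain ⟨hax, hxt⟩ := Set.mem_iInter.mp hx 0
    exact ⟨hax, hxt.trans (htb 0)⟩
  rintro (hnull | ⟨I, -, hI⟩)
  · exact not_nullSet_of_left_mem (Set.mem_iInter.mpr fun n => Set.left_mem_Icc.mpr (hat n).le)
      hnull
  · exact hdiv (I + a) <| seqConv_sub_const_iff.mp <|
      hI _ happrox _ fun n => hasStepIntegral_chi_Icc (hat n) (htb n)

open Classical in
noncomputable def bisectStep (A : Set F) (p : F × F) : F × F :=
  if (p.1 + p.2) / 2 ∈ A then ((p.1 + p.2) / 2, p.2) else (p.1, (p.1 + p.2) / 2)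

theorem bisectStep_spec {A : Set F} {p : F × F} (h₁ : p.1 ∈ A) (h₂ : p.2 ∉ A) :
    (bisectStep A p).1 ∈ A ∧ (bisectStep A p).2 ∉ A ∧
      (bisectStep A p).2 - (bisectStep A p).1 = (p.2 - p.1) / 2 := by
  unfold bisectStep
  split_ifs with hm
  · exact ⟨hm, h₂, by ring⟩
  · exact ⟨h₁, hm, by ring⟩

theorem bisectStep_snd_le {A : Set F} {p : F × F} (h : p.1 ≤ p.2) : (bisectStep A p).2 ≤ p.2 := by
  unfold bisectStep
  split_ifs
  · exact le_rfl
  · dsimp only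
    linarith

theorem iterate_bisectStep_spec {A : Set F} {p : F × F} (h₁ : p.1 ∈ A) (h₂ : p.2 ∉ A) (n : ℕ) :
    ((bisectStep A)^[n] p).1 ∈ A ∧ ((bisectStep A)^[n] p).2 ∉ A ∧
      ((bisectStep A)^[n] p).2 - ((bisectStep A)^[n] p).1 = (p.2 - p.1) * (1 / 2) ^ n := by
  induction n with
  | zero => simpa using ⟨h₁, h₂⟩
  | succ n ih =>
    obtain ⟨ih₁, ih₂, ih₃⟩ := ih
    obtain ⟨h₁', h₂', h₃'⟩ := bisectStep_spec ih₁ ih₂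
    rw [Function.iterate_succ_apply']
    exact ⟨h₁', h₂', by rw [h₃', ih₃, pow_succ]; ring⟩

section Gap

variable {A : Set F} (hA : ∀ x ∈ A, ∀ y ∉ A, x < y) {p : F × F} (h₁ : p.1 ∈ A) (h₂ : p.2 ∉ A)
include hA h₁ h₂

theorem antitone_iterate_bisectStep_snd : Antitone fun n => ((bisectStep A)^[n] p).2 := by
  refine antitone_nat_of_succ_le fun n => ?_
  obtain ⟨h₁', h₂', -⟩ := iterate_bisectStep_spec h₁ h₂ n
  rw [Function.iterate_succ_apply']
  exact bisectStep_snd_le (hA _ h₁' _ h₂').le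

theorem isCutPoint_of_seqConv_iterate_bisectStep
    (hhalf : SeqConv (fun n => (1 / 2 : F) ^ n) 0) {c : F}
    (hc : SeqConv (fun n => ((bisectStep A)^[n] p).2) c) : IsCutPoint A c := by
  have hspec := iterate_bisectStep_spec h₁ h₂
  have hwidth : SeqConv (fun n => ((bisectStep A)^[n] p).2 - ((bisectStep A)^[n] p).1) 0 := by
    have hw : ∀ n, ((bisectStep A)^[n] p).2 - ((bisectStep A)^[n] p).1 =
        (p.2 - p.1) * (1 / 2) ^ n := fun n => (hspec n).2.2
    simpa only [hw, mul_zero] using hhalf.const_mul (p.2 - p.1)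
  have hfst : SeqConv (fun n => ((bisectStep A)^[n] p).1) c := by
    simpa only [sub_sub_cancel, sub_zero] using hc.sub hwidth
  intro x hx y hy
  exact ⟨hc.ge_of_forall_le fun n => (hA x hx _ (hspec n).2.1).le,
    hfst.le_of_forall_le fun n => (hA _ (hspec n).1 y hy).le⟩

end Gap

theorem exists_antitone_not_seqConv_of_not_cutAxiom (hCA : ¬ CutAxiom F) :
    ∃ (a b : F) (t : ℕ → F), Antitone t ∧ (∀ n, a < t n) ∧ (∀ n, t n ≤ b) ∧
      ∀ L, ¬ SeqConv t L := by
  by_cases hhalf : SeqConv (fun n => (1 / 2 : F) ^ n) 0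
  · simp only [CutAxiom, not_forall, not_exists] at hCA
    obtain ⟨A, ⟨⟨a, ha⟩, hne, hA⟩, hgap⟩ := hCA
    obtain ⟨b, hb⟩ : ∃ b, b ∉ A := by
      by_contra! h
      exact hne (Set.eq_univ_of_forall h)
    have hanti := antitone_iterate_bisectStep_snd hA (p := (a, b)) ha hb
    exact ⟨a, b, _, hanti, fun n => hA a ha _ (iterate_bisectStep_spec ha hb n).2.1,
      fun n => hanti n.zero_le,
      fun c hc => hgap c (isCutPoint_of_seqConv_iterate_bisectStep hA ha hb hhalf hc)⟩
  · exact ⟨0, 1, fun n => (1 / 2 : F) ^ n,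
      fun _ _ hmn => pow_le_pow_of_le_one (by norm_num) (by norm_num) hmn,
      fun n => by positivity, fun n => pow_le_one₀ (by norm_num) (by norm_num),
      fun L hL => hhalf (eq_zero_of_seqConv_half_pow hL ▸ hL)⟩

theorem not_cutAxiom_implies_not_lebesgueMeasureProperty (F : Type*) [Field F] [LinearOrder F] [IsStrictOrderedRing F]
    (hCA : ¬ CutAxiom F) :
    ∃ a b : F, a ≤ b ∧ ∃ E ⊆ Set.Icc a b, MeasSet a b E ∧ ¬ HasLebMeasure a b E := by
  obtain ⟨a, b, t, ht, hat, htb, hdiv⟩ := exists_antitone_not_seqConv_of_not_cutAxiom hCA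
  exact ⟨a, b, (hat 0).le.trans (htb 0), exists_measSet_not_hasLebMeasure ht hat htb hdiv⟩

end Littlewood
end
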